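/- arXiv:1705.08440 — 3 statements merged into one kernel-verified Lean document; each statement's English description precedes it below -/
import Mathlib

section
/- If m₁ and m₂ are mass functions on the powerset of a finite set Ω with commonality functions Q₁ and Q₂, then the Dempster (unnormalized) combination m₁₂, defined by m₁₂(A) = Σ_{B ∩ C = A} m₁(B)·m₂(C), has commonality function Q₁₂ satisfying Q₁₂(A) = Q₁(A)·Q₂(A) for every A ⊆ Ω. -/
open Finset

/-- Commonality function of a mass function. -/
def commonality {Ω : Type*} [Fintype Ω] [DecidableEq Ω]
    (m : Finset Ω → ℝ) (A : Finset Ω) : ℝ :=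
  ∑ B ∈ Finset.univ.filter (fun B => A ⊆ B), m B

/-- Unnormalized Dempster combination of two mass functions. -/
def dempster {Ω : Type*} [Fintype Ω] [DecidableEq Ω]
    (m₁ m₂ : Finset Ω → ℝ) (A : Finset Ω) : ℝ :=
  ∑ p ∈ (Finset.univ ×ˢ Finset.univ).filter
      (fun p : Finset Ω × Finset Ω => p.1 ∩ p.2 = A), m₁ p.1 * m₂ p.2

private lemma ite_sum {α : Type*} {s : Finset α} (p : Prop) [Decidable p] (f : α → ℝ) :
    (if p then ∑ x ∈ s, f x else 0) = ∑ x ∈ s, if p then f x else 0 := by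
  split <;> simp

/-- The commonality of the Dempster combination is the pointwise product
of the commonalities. -/
theorem commonality_dempster {Ω : Type*} [Fintype Ω] [DecidableEq Ω]
    (m₁ m₂ : Finset Ω → ℝ) (A : Finset Ω) :
    commonality (dempster m₁ m₂) A = commonality m₁ A * commonality m₂ A := by
  classical
  unfold commonality dempster
  rw [Finset.sum_mul_sum]
  simp only [Finset.sum_filter, Finset.sum_product, ite_sum]
  rw [Finset.sum_comm]
  refine Finset.sum_congr rfl fun B _ => ?_
  rw [Finset.sum_comm]
  refine Finset.sum_congr rfl fun C _ => ?_
  have : ∀ a : Finset Ω, (if A ⊆ a then if B ∩ C = a then m₁ B * m₂ C else 0 else 0)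
      = if B ∩ C = a then (if A ⊆ a then m₁ B * m₂ C else 0) else 0 := by
    intro a; split <;> split <;> simp_all
  simp only [this, Finset.sum_ite_eq, Finset.mem_univ, if_true, Finset.subset_inter_iff]
  by_cases h1 : A ⊆ B <;> by_cases h2 : A ⊆ C <;> simp [h1, h2]
end

section
/- Let Q₁, Q₂ : Finset Ω → ℝ be commonality functions of two mass functions on a finite set Ω, with Q₂(A) ≠ 0 for all A. Then there exists a unique mass function m₁₂ (possibly with negative values) whose commonality function Q₁₂ satisfies Q₁₂(A) = Q₁(A)/Q₂(A) for all A ⊆ Ω; i.e., the decombination of pseudo-belief functions always exists. -/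
open Finset

/-!
The commonality transform `m ↦ Q` is the upward summation operator `f ↦ (x ↦ ∑ y ≥ x, f y)` on
the finite poset of subsets of `Ω`. Möbius inversion recovers `f` from its upward sums, so this
operator is an injective linear endomorphism of a finite-dimensional space, hence bijective:
every function on subsets, in particular `Q₁ / Q₂`, is the commonality of exactly one
pseudo-mass function.
-/

section SumIci

variable {𝕜 α : Type*} [PartialOrder α] [OrderTop α] [LocallyFiniteOrder α]

variable (𝕜 α) in
def sumIciLinearMap [Semiring 𝕜] : (α → 𝕜) →ₗ[𝕜] (α → 𝕜) where
  toFun f x := ∑ y ∈ Ici x, f y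
  map_add' f g := by ext x; simp [sum_add_distrib]
  map_smul' c f := by ext x; simp [mul_sum]

lemma sum_Ici_injective [Ring 𝕜] [DecidableEq α] :
    Function.Injective fun (f : α → 𝕜) x => ∑ y ∈ Ici x, f y := by
  intro f f' h
  funext x
  rw [IncidenceAlgebra.moebius_inversion_top f _ (congrFun h.symm) x,
    IncidenceAlgebra.moebius_inversion_top f' _ (fun _ => rfl) x]

lemma sum_Ici_bijective [Field 𝕜] [Finite α] :
    Function.Bijective fun (f : α → 𝕜) x => ∑ y ∈ Ici x, f y := by
  classical
  have hinj : Function.Injective (sumIciLinearMap 𝕜 α) := sum_Ici_injective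
  exact ⟨hinj, LinearMap.injective_iff_surjective.mp hinj⟩

end SumIci

lemma commonality_eq_sum_Ici {Ω : Type*} [Fintype Ω] [DecidableEq Ω]
    (m : Finset Ω → ℝ) (A : Finset Ω) : commonality m A = ∑ B ∈ Ici A, m B := by
  unfold commonality
  congr 1
  ext B
  simp

theorem decombination_exists_unique_general {Ω : Type*} [Fintype Ω] [DecidableEq Ω]
    (m₁ m₂ : Finset Ω → ℝ) :
    ∃! m₁₂ : Finset Ω → ℝ,
      ∀ A : Finset Ω, commonality m₁₂ A = commonality m₁ A / commonality m₂ A := by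
  simp only [commonality_eq_sum_Ici, ← funext_iff]
  exact sum_Ici_bijective.existsUnique _

/-- Decombination always exists and is unique among pseudo-mass functions:
there is a unique mass function whose commonality is the pointwise quotient
of the given commonalities. -/
theorem decombination_exists_unique {Ω : Type*} [Fintype Ω] [DecidableEq Ω]
    (m₁ m₂ : Finset Ω → ℝ) (h₂ : ∀ A : Finset Ω, commonality m₂ A ≠ 0) :
    ∃! m₁₂ : Finset Ω → ℝ,
      ∀ A : Finset Ω, commonality m₁₂ A = commonality m₁ A / commonality m₂ A :=
  decombination_exists_unique_general m₁ m₂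
end

section
/- In a dag, if two nodes α and β (both outside a node set L) are connected by an active trail given L, then they are connected by a simple active trail given L, i.e., an active trail that visits no node more than once. -/
/-- `vs` is a trail in the digraph `E`: consecutive vertices are joined by an
arc of `E` in one direction or the other. -/
def IsTrail {V : Type*} (E : V → V → Prop) (vs : List V) : Prop :=
  vs.Chain' (fun a b => E a b ∨ E b a)

/-- The node at (interior) position `i` of `vs` is head-to-head: both adjacent
links point into it. -/
def IsHeadToHead {V : Type*} (E : V → V → Prop) (vs : List V) (i : ℕ) : Prop :=
  1 ≤ i ∧ i + 1 < vs.length ∧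
    ∃ a b c, vs[i - 1]? = some a ∧ vs[i]? = some b ∧
      vs[i + 1]? = some c ∧ E a b ∧ E c b

/-- The trail `vs` is active given the node set `L`: every head-to-head node is
in `L` or has a descendant in `L`, and every other node of the trail lies
outside `L`. -/
def IsActive {V : Type*} (E : V → V → Prop) (L : Set V) (vs : List V) : Prop :=
  ∀ i < vs.length, ∀ b : V, vs[i]? = some b →
    (IsHeadToHead E vs i → b ∈ L ∨ ∃ d ∈ L, Relation.ReflTransGen E b d) ∧
    (¬ IsHeadToHead E vs i → b ∉ L)

/-!
Cut out the closed sub-trail between two occurrences of a repeated node `v`. Every other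
node keeps its neighbours, so only `v` needs checking. If `v` is not head-to-head on the
shortened trail, it was not head-to-head at one of its two original occurrences, so `v ∉ L`.
If it is head-to-head there but at neither original occurrence, the loop leaves `v` along
an arc and comes back to it against an arc; where the loop first turns there is a
head-to-head node reachable from `v` by a directed path, whose descendant in `L` is then a
descendant of `v`. Repeating this shortens the trail until it is simple.
-/

namespace List

variable {α : Type*}

theorem IsChain.of_getElem? {R : α → α → Prop} {l : List α} (h : l.IsChain R)
    {k : ℕ} {a b : α} (ha : l[k]? = some a) (hb : l[k + 1]? = some b) : R a b := by
  obtain ⟨hk, rfl⟩ := getElem?_eq_some_iff.mp hb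
  obtain ⟨_, rfl⟩ := getElem?_eq_some_iff.mp ha
  exact h.getElem k hk

theorem isChain_of_getElem? {R : α → α → Prop} {l : List α}
    (h : ∀ k a b, l[k]? = some a → l[k + 1]? = some b → R a b) : l.IsChain R :=
  isChain_iff_getElem.mpr fun k hk =>
    h k _ _ (getElem?_eq_getElem (by omega)) (getElem?_eq_getElem hk)

theorem getElem?_take_append_drop_of_ge {l : List α} {i j k : ℕ} (hi : i ≤ l.length)
    (hk : i ≤ k) : (l.take i ++ l.drop j)[k]? = l[j + (k - i)]? := by
  rw [getElem?_append_right (by simp; omega), getElem?_drop, length_take, min_eq_left hi]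

theorem getElem?_take_append_drop_of_le {l : List α} {i j k : ℕ} (hi : i ≤ l.length)
    (hij : l[i]? = l[j]?) (hk : k ≤ i) : (l.take i ++ l.drop j)[k]? = l[k]? := by
  rcases hk.lt_or_eq with hk | rfl
  · rw [getElem?_append_left (by simp; omega), getElem?_take_of_lt hk]
  · rw [getElem?_take_append_drop_of_ge hi le_rfl, Nat.sub_self, Nat.add_zero, hij]

end List

section Trails

variable {V : Type*} {E : V → V → Prop} {L : Set V} {vs : List V}

theorem isHeadToHead_of_getElem? {i : ℕ} {a b c : V} (hi : 1 ≤ i) (ha : vs[i - 1]? = some a)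
    (hb : vs[i]? = some b) (hc : vs[i + 1]? = some c) (hab : E a b) (hcb : E c b) :
    IsHeadToHead E vs i :=
  ⟨hi, (List.getElem?_eq_some_iff.mp hc).1, a, b, c, ha, hb, hc, hab, hcb⟩

theorem IsHeadToHead.of_getElem?_eq {ws : List V} {k m : ℕ} (h : IsHeadToHead E ws k)
    (hm : 1 ≤ m) (h₀ : ws[k - 1]? = vs[m - 1]?) (h₁ : ws[k]? = vs[m]?)
    (h₂ : ws[k + 1]? = vs[m + 1]?) : IsHeadToHead E vs m := by
  obtain ⟨-, -, a, b, c, ha, hb, hc, hab, hcb⟩ := h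
  exact isHeadToHead_of_getElem? hm (h₀ ▸ ha) (h₁ ▸ hb) (h₂ ▸ hc) hab hcb

theorem isHeadToHead_iff_of_getElem?_eq {ws : List V} {k m : ℕ} (hkm : 1 ≤ k ↔ 1 ≤ m)
    (h₀ : ws[k - 1]? = vs[m - 1]?) (h₁ : ws[k]? = vs[m]?) (h₂ : ws[k + 1]? = vs[m + 1]?) :
    IsHeadToHead E ws k ↔ IsHeadToHead E vs m :=
  ⟨fun h => h.of_getElem?_eq (hkm.mp h.1) h₀ h₁ h₂,
    fun h => h.of_getElem?_eq (hkm.mpr h.1) h₀.symm h₁.symm h₂.symm⟩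

theorem IsHeadToHead.of_drop {i k : ℕ} (h : IsHeadToHead E (vs.drop i) k) :
    IsHeadToHead E vs (i + k) := by
  have hk := h.1
  refine h.of_getElem?_eq (by omega) ?_ (List.getElem?_drop ..) ?_
  · rw [List.getElem?_drop, show i + (k - 1) = i + k - 1 by omega]
  · rw [List.getElem?_drop, Nat.add_assoc]

/-- The first place where the trail stops following arcs forward is head-to-head. -/
theorem IsTrail.exists_isHeadToHead_reachable {a b : V} {l : List V}
    (htrail : IsTrail E (a :: b :: l)) (hab : E a b) (hpath : ¬ (a :: b :: l).IsChain E) :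
    ∃ k x, IsHeadToHead E (a :: b :: l) k ∧ (a :: b :: l)[k]? = some x ∧
      Relation.ReflTransGen E a x := by
  induction l generalizing a b with
  | nil => exact absurd (List.isChain_pair.mpr hab) hpath
  | cons c l ih =>
    have hbc : IsTrail E (b :: c :: l) := (List.isChain_cons_cons.mp htrail).2
    by_cases hfwd : E b c
    · obtain ⟨k, x, hk, hx, hbx⟩ :=
        ih hbc hfwd fun h => hpath (List.isChain_cons_cons.mpr ⟨hab, h⟩)
      obtain ⟨k, rfl⟩ : ∃ k', k = k' + 1 := Nat.exists_eq_add_of_le' hk.1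
      exact ⟨k + 2, x, hk.of_getElem?_eq (by omega) rfl rfl rfl, hx, .head hab hbx⟩
    · have hcb : E c b := (List.isChain_cons_cons.mp hbc).1.resolve_left hfwd
      exact ⟨1, b, isHeadToHead_of_getElem? le_rfl rfl rfl rfl hab hcb, rfl, .single hab⟩

theorem IsTrail.take_append_drop (htrail : IsTrail E vs) {i j : ℕ} (hi : i ≤ vs.length)
    (hij : vs[i]? = vs[j]?) : IsTrail E (vs.take i ++ vs.drop j) := by
  refine List.isChain_of_getElem? fun k a b ha hb => ?_
  rcases Nat.lt_or_ge k i with hk | hk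
  · rw [List.getElem?_take_append_drop_of_le hi hij hk.le] at ha
    rw [List.getElem?_take_append_drop_of_le hi hij hk] at hb
    exact htrail.of_getElem? ha hb
  · rw [List.getElem?_take_append_drop_of_ge hi hk] at ha
    rw [List.getElem?_take_append_drop_of_ge hi (by omega),
      show j + (k + 1 - i) = j + (k - i) + 1 by omega] at hb
    exact htrail.of_getElem? ha hb

theorem IsActive.of_getElem?_eq (hactive : IsActive E L vs) {ws : List V} {k m : ℕ}
    (hkm : 1 ≤ k ↔ 1 ≤ m) (h₀ : ws[k - 1]? = vs[m - 1]?) (h₁ : ws[k]? = vs[m]?)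
    (h₂ : ws[k + 1]? = vs[m + 1]?) {b : V} (hb : ws[k]? = some b) :
    (IsHeadToHead E ws k → b ∈ L ∨ ∃ d ∈ L, Relation.ReflTransGen E b d) ∧
      (¬ IsHeadToHead E ws k → b ∉ L) := by
  rw [isHeadToHead_iff_of_getElem?_eq hkm h₀ h₁ h₂]
  exact hactive m (List.getElem?_eq_some_iff.mp (h₁ ▸ hb)).1 b (h₁ ▸ hb)

theorem IsActive.exists_reach_of_isHeadToHead (hactive : IsActive E L vs) {k : ℕ} {b : V}
    (hb : vs[k]? = some b) (h : IsHeadToHead E vs k) :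
    ∃ d ∈ L, Relation.ReflTransGen E b d :=
  ((hactive k (List.getElem?_eq_some_iff.mp hb).1 b hb).1 h).elim
    (fun hbL => ⟨b, hbL, .refl⟩) id

theorem IsActive.exists_reach_of_turn (htrail : IsTrail E vs) (hactive : IsActive E L vs)
    {i m : ℕ} (him : i ≤ m) {a b c d : V} (ha : vs[i]? = some a) (hb : vs[i + 1]? = some b)
    (hab : E a b) (hc : vs[m]? = some c) (hd : vs[m + 1]? = some d) (hcd : ¬ E c d) :
    ∃ e ∈ L, Relation.ReflTransGen E a e := by
  have hdrop : vs.drop i = a :: b :: vs.drop (i + 2) := by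
    ext n
    rcases n with _ | _ | n <;> simp [ha, hb, Nat.add_assoc, Nat.add_comm 2]
  have hpath : ¬ (a :: b :: vs.drop (i + 2)).IsChain E := fun h =>
    hcd ((hdrop ▸ h).of_getElem? (k := m - i)
      (by rw [List.getElem?_drop, Nat.add_sub_cancel' him, hc])
      (by rw [List.getElem?_drop, ← Nat.add_assoc, Nat.add_sub_cancel' him, hd]))
  obtain ⟨k, x, hk, hx, hax⟩ :=
    IsTrail.exists_isHeadToHead_reachable (hdrop ▸ htrail.drop i) hab hpath
  obtain ⟨e, he, hxe⟩ := hactive.exists_reach_of_isHeadToHead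
    (by rwa [← List.getElem?_drop, hdrop]) (IsHeadToHead.of_drop (hdrop ▸ hk))
  exact ⟨e, he, hax.trans hxe⟩

section Shortcut

variable {i j : ℕ} {v : V}

theorem IsActive.exists_reach_of_isHeadToHead_take_append_drop (htrail : IsTrail E vs)
    (hactive : IsActive E L vs) (hij : i < j) (hj : j < vs.length) (hvi : vs[i]? = some v)
    (hvj : vs[j]? = some v) (h : IsHeadToHead E (vs.take i ++ vs.drop j) i) :
    ∃ d ∈ L, Relation.ReflTransGen E v d := by
  have hi : i ≤ vs.length := by omega
  obtain ⟨hi1, -, a, b, c, ha, hb, hc, hab, hcb⟩ := h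
  rw [List.getElem?_take_append_drop_of_le hi (hvi.trans hvj.symm) (by omega)] at ha
  rw [List.getElem?_take_append_drop_of_le hi (hvi.trans hvj.symm) le_rfl, hvi,
    Option.some_inj] at hb
  rw [List.getElem?_take_append_drop_of_ge hi (by omega), Nat.add_sub_cancel_left] at hc
  subst hb
  by_cases hhi : IsHeadToHead E vs i
  · exact hactive.exists_reach_of_isHeadToHead hvi hhi
  by_cases hhj : IsHeadToHead E vs j
  · exact hactive.exists_reach_of_isHeadToHead hvj hhj
  -- `v` is head-to-head at neither occurrence, so the loop leaves `v` forward and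
  -- returns to it backward, and must turn in between.
  obtain ⟨y, hy⟩ : ∃ y, vs[i + 1]? = some y := ⟨_, List.getElem?_eq_getElem (by omega)⟩
  obtain ⟨z, hz⟩ : ∃ z, vs[j - 1]? = some z := ⟨_, List.getElem?_eq_getElem (by omega)⟩
  have hvy : E v y := (htrail.of_getElem? hvi hy).resolve_right fun hyv =>
    hhi (isHeadToHead_of_getElem? hi1 ha hvi hy hab hyv)
  have hzv : ¬ E z v := fun hzv =>
    hhj (isHeadToHead_of_getElem? (by omega) hz hvj hc hzv hcb)
  exact hactive.exists_reach_of_turn htrail (by omega) hvi hy hvy hz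
    (by rwa [Nat.sub_add_cancel (by omega)]) hzv

theorem IsActive.not_mem_of_not_isHeadToHead_take_append_drop (hactive : IsActive E L vs)
    (hvi : vs[i]? = some v) (hvj : vs[j]? = some v)
    (h : ¬ IsHeadToHead E (vs.take i ++ vs.drop j) i) : v ∉ L := by
  intro hvL
  have hi : i ≤ vs.length := (List.getElem?_eq_some_iff.mp hvi).1.le
  have head_to_head_of_mem {k : ℕ} (hvk : vs[k]? = some v) : IsHeadToHead E vs k :=
    by_contra fun hk => (hactive k (List.getElem?_eq_some_iff.mp hvk).1 v hvk).2 hk hvL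
  obtain ⟨hi1, -, a, b, -, ha, hb, -, hab, -⟩ := head_to_head_of_mem hvi
  obtain ⟨-, -, -, b', c, -, hb', hc, -, hcb⟩ := head_to_head_of_mem hvj
  rw [hvi, Option.some_inj] at hb
  rw [hvj, Option.some_inj] at hb'
  subst hb hb'
  refine h (isHeadToHead_of_getElem? hi1 ?_ ?_ ?_ hab hcb)
  · rwa [List.getElem?_take_append_drop_of_le hi (hvi.trans hvj.symm) (by omega)]
  · rwa [List.getElem?_take_append_drop_of_le hi (hvi.trans hvj.symm) le_rfl]
  · rwa [List.getElem?_take_append_drop_of_ge hi (by omega), Nat.add_sub_cancel_left]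

theorem IsActive.take_append_drop (htrail : IsTrail E vs) (hactive : IsActive E L vs)
    (hij : i < j) (hj : j < vs.length) (heq : vs[i]? = vs[j]?) :
    IsActive E L (vs.take i ++ vs.drop j) := by
  have hi : i ≤ vs.length := by omega
  intro k hk b hb
  rcases lt_trichotomy k i with hki | rfl | hik
  · refine hactive.of_getElem?_eq Iff.rfl ?_ ?_ ?_ hb <;>
      exact List.getElem?_take_append_drop_of_le hi heq (by omega)
  · have hvi : vs[k]? = some b := by
      rwa [List.getElem?_take_append_drop_of_le hi heq le_rfl] at hb
    have hvj : vs[j]? = some b := heq ▸ hvi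
    exact ⟨fun h => .inr (hactive.exists_reach_of_isHeadToHead_take_append_drop htrail hij hj
      hvi hvj h), hactive.not_mem_of_not_isHeadToHead_take_append_drop hvi hvj⟩
  · refine hactive.of_getElem?_eq (m := j + (k - i)) (by omega) ?_ ?_ ?_ hb
    · rw [List.getElem?_take_append_drop_of_ge hi (by omega)]
      congr 1
      omega
    · exact List.getElem?_take_append_drop_of_ge hi hik.le
    · rw [List.getElem?_take_append_drop_of_ge hi (by omega)]
      congr 1
      omega

theorem IsActive.exists_shorter_of_not_nodup (htrail : IsTrail E vs)
    (hactive : IsActive E L vs) (hnd : ¬ vs.Nodup) :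
    ∃ ws : List V, ws.length < vs.length ∧ IsTrail E ws ∧ ws.head? = vs.head? ∧
      ws.getLast? = vs.getLast? ∧ IsActive E L ws := by
  obtain ⟨i, j, hij, hj, heq⟩ := by simpa [List.nodup_iff_getElem?_ne_getElem?] using hnd
  have hi : i ≤ vs.length := by omega
  have hlen : (vs.take i ++ vs.drop j).length = i + (vs.length - j) := by simp; omega
  refine ⟨vs.take i ++ vs.drop j, by omega, htrail.take_append_drop hi heq, ?_, ?_,
    hactive.take_append_drop htrail hij hj heq⟩
  · rw [List.head?_eq_getElem?, List.head?_eq_getElem?,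
      List.getElem?_take_append_drop_of_le hi heq (Nat.zero_le i)]
  · rw [List.getLast?_eq_getElem?, List.getLast?_eq_getElem?,
      List.getElem?_take_append_drop_of_ge hi (by omega), hlen]
    congr 1
    omega

end Shortcut

end Trails

theorem exists_simple_active_trail_general {V : Type*}
    (E : V → V → Prop)
    (L : Set V) (α β : V)
    (vs : List V) (htrail : IsTrail E vs)
    (hhead : vs.head? = some α) (hlast : vs.getLast? = some β)
    (hactive : IsActive E L vs) :
    ∃ ws : List V, IsTrail E ws ∧ ws.head? = some α ∧ ws.getLast? = some β ∧
      IsActive E L ws ∧ ws.Nodup := by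
  induction hn : vs.length using Nat.strong_induction_on generalizing vs with
  | _ n ih =>
  by_cases hnd : vs.Nodup
  · exact ⟨vs, htrail, hhead, hlast, hactive, hnd⟩
  obtain ⟨ws, hlt, hws, hhd, hlst, hact⟩ := hactive.exists_shorter_of_not_nodup htrail hnd
  exact ih _ (hn ▸ hlt) ws hws (hhd.trans hhead) (hlst.trans hlast) hact rfl

/-- If two nodes outside `L` are connected by an active trail given `L` in a
finite dag, then they are connected by a simple (vertex-repetition free) active
trail given `L`. -/
theorem exists_simple_active_trail {V : Type*} [Fintype V]
    (E : V → V → Prop) (hacyc : ∀ v : V, ¬ Relation.TransGen E v v)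
    (L : Set V) (α β : V) (hα : α ∉ L) (hβ : β ∉ L)
    (vs : List V) (htrail : IsTrail E vs)
    (hhead : vs.head? = some α) (hlast : vs.getLast? = some β)
    (hactive : IsActive E L vs) :
    ∃ ws : List V, IsTrail E ws ∧ ws.head? = some α ∧ ws.getLast? = some β ∧
      IsActive E L ws ∧ ws.Nodup :=
  exists_simple_active_trail_general E L α β vs htrail hhead hlast hactive
end
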